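/- For finite Λ ⊂ Z^d, γ ≥ 0 and x ∈ Λ, the addition operator a^{(γ)}_{Λ,x} maps R^{(γ)}_Λ bijectively onto itself and preserves Lebesgue measure on R^{(γ)}_Λ. Consequently the normalized uniform measure m^{(γ)}_Λ on R^{(γ)}_Λ is invariant under each a^{(γ)}_{Λ,x}. -/

import Mathlib

/-- Sites of the lattice `ℤ^d`. -/
abbrev Site (d : ℕ) := Fin d → ℤ

/-- ℓ¹ (taxicab) distance on `ℤ^d`. -/
def dist1 {d : ℕ} (x y : Site d) : ℕ := ∑ i, (x i - y i).natAbs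

/-- The unit step in direction `i`, with sign given by `b`. -/
def step {d : ℕ} (i : Fin d) (b : Bool) : Site d :=
  fun j => if j = i then (if b then 1 else -1) else 0

/-- `p d n x y` is the `n`-step transition probability of the simple random
walk on `ℤ^d` stepping to each of the `2d` nearest neighbors with
probability `1/(2d)`. -/
noncomputable def srwP (d : ℕ) : ℕ → Site d → Site d → ℝ
  | 0, x, y => if x = y then 1 else 0
  | n + 1, x, y => (1 / (2 * d)) * ∑ s : Fin d × Bool, srwP d n (x + step s.1 s.2) y


/-- Sites of a finite volume `Λ ⊂ ℤ^d`. -/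
abbrev SiteIn (d : ℕ) (Λ : Finset (Site d)) := {z : Site d // z ∈ Λ}

/-- Height configurations in the finite volume `Λ`. -/
abbrev ConfigIn (d : ℕ) (Λ : Finset (Site d)) := SiteIn d Λ → ℝ

/-- The toppling matrix `Δ^{(γ)}_Λ` restricted to `Λ`. -/
noncomputable def toppleMatIn (d : ℕ) (γ : ℝ) (Λ : Finset (Site d)) :
    Matrix (SiteIn d Λ) (SiteIn d Λ) ℝ :=
  fun x y =>
    if (x : Site d) = (y : Site d) then 2 * d + γ
    else if dist1 (x : Site d) (y : Site d) = 1 then -1 else 0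

/-- `η` is allowed: it contains no forbidden subconfiguration, i.e. for every
nonempty `W ⊆ Λ` there is `y ∈ W` whose height is at least the number of
neighbors of `y` inside `W`. -/
def isAllowed (d : ℕ) (Λ : Finset (Site d)) (η : ConfigIn d Λ) : Prop :=
  ∀ W : Finset (SiteIn d Λ), W.Nonempty →
    ∃ y ∈ W,
      ((W.filter fun z : SiteIn d Λ => dist1 (z : Site d) (y : Site d) = 1).card : ℝ) ≤ η y

/-- The set `R^{(γ)}_Λ` of allowed stable configurations in `[0, 2d+γ)^Λ`. -/
def allowedSet (d : ℕ) (γ : ℝ) (Λ : Finset (Site d)) : Set (ConfigIn d Λ) :=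
  {η | (∀ y, 0 ≤ η y ∧ η y < 2 * d + γ) ∧ isAllowed d Λ η}

/-- Toppling at `x ∈ Λ`: subtract the row `(Δ^{(γ)}_Λ)_{x,·}` (mass sent to
sites outside `Λ` is lost). -/
noncomputable def toppleIn (d : ℕ) (γ : ℝ) (Λ : Finset (Site d)) (x : SiteIn d Λ)
    (η : ConfigIn d Λ) : ConfigIn d Λ :=
  fun y => η y - toppleMatIn d γ Λ x y

/-- Apply a finite sequence of topplings in `Λ`. -/
noncomputable def applyListIn (d : ℕ) (γ : ℝ) (Λ : Finset (Site d)) :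
    List (SiteIn d Λ) → ConfigIn d Λ → ConfigIn d Λ
  | [], η => η
  | x :: l, η => applyListIn d γ Λ l (toppleIn d γ Λ x η)

/-- Legality of a sequence of topplings in `Λ`: each toppled site is unstable
(height `≥ 2d+γ`) when toppled. -/
def legalListIn (d : ℕ) (γ : ℝ) (Λ : Finset (Site d)) :
    ConfigIn d Λ → List (SiteIn d Λ) → Prop
  | _, [] => True
  | η, x :: l => 2 * d + γ ≤ η x ∧ legalListIn d γ Λ (toppleIn d γ Λ x η) l

/-- A stabilizing sequence in `Λ`: legal, with stable final configuration. -/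
def stabilizingListIn (d : ℕ) (γ : ℝ) (Λ : Finset (Site d)) (η : ConfigIn d Λ)
    (l : List (SiteIn d Λ)) : Prop :=
  legalListIn d γ Λ η l ∧ ∀ y, applyListIn d γ Λ l η y < 2 * d + γ

/-- The stabilization map `S^{(γ)}_Λ` (via a choice of stabilizing sequence;
independent of the choice by abelianness). -/
noncomputable def stabilizeIn (d : ℕ) (γ : ℝ) (Λ : Finset (Site d))
    (η : ConfigIn d Λ) : ConfigIn d Λ :=
  open scoped Classical in
  if h : ∃ l, stabilizingListIn d γ Λ η l then applyListIn d γ Λ h.choose η else η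

/-- Unit mass at `x ∈ Λ`. -/
noncomputable def deltaIn (d : ℕ) (Λ : Finset (Site d)) (x : SiteIn d Λ) :
    ConfigIn d Λ :=
  fun y => if y = x then 1 else 0

/-- The addition operator `a^{(γ)}_{Λ,x} η = S^{(γ)}_Λ(η + δ_x)`. -/
noncomputable def addOpIn (d : ℕ) (γ : ℝ) (Λ : Finset (Site d)) (x : SiteIn d Λ)
    (η : ConfigIn d Λ) : ConfigIn d Λ :=
  stabilizeIn d γ Λ (η + deltaIn d Λ x)

lemma dist1_self {d : ℕ} (y : Site d) : dist1 y y = 0 := by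
  simp [dist1]

lemma dist1_symm {d : ℕ} (x y : Site d) : dist1 x y = dist1 y x := by
  unfold dist1
  exact Finset.sum_congr rfl fun i _ => by omega

lemma exists_step_of_dist1 {d : ℕ} {z y : Site d} (h : dist1 z y = 1) :
    ∃ p : Fin d × Bool, z = y + step p.1 p.2 := by
  unfold dist1 at h
  obtain ⟨i, hi, _⟩ : ∃ i ∈ Finset.univ, (z i - y i).natAbs ≠ 0 := by
    by_contra hc
    push_neg at hc
    rw [Finset.sum_eq_zero (fun i hi => hc i hi)] at h
    omega
  have hi1 : (z i - y i).natAbs = 1 := by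
    have hle : (z i - y i).natAbs ≤ 1 := h ▸ Finset.single_le_sum (f := fun i => (z i - y i).natAbs) (fun _ _ => Nat.zero_le _) (Finset.mem_univ i)
    omega
  have hothers : ∀ j, j ≠ i → (z j - y j).natAbs = 0 := by
    intro j hj
    have hsplit := Finset.add_sum_erase Finset.univ (fun i => (z i - y i).natAbs) (Finset.mem_univ i)
    rw [← hsplit, hi1] at h
    have h0 : ∑ k ∈ Finset.univ.erase i, (z k - y k).natAbs = 0 := by omega
    exact Finset.sum_eq_zero_iff.mp h0 j (Finset.mem_erase.mpr ⟨hj, Finset.mem_univ j⟩)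
  refine ⟨(i, decide (y i < z i)), funext fun j => ?_⟩
  simp only [Pi.add_apply, step]
  by_cases hji : j = i
  · subst hji
    simp only [if_pos rfl]
    rcases Int.natAbs_eq_iff.mp hi1 with hc | hc
    · have : y j < z j := by omega
      simp [this]; omega
    · have : ¬ (y j < z j) := by omega
      simp [this]; omega
  · have := hothers j hji
    simp only [if_neg hji, add_zero]
    omega

lemma add_step_inj {d : ℕ} {y : Site d} {p q : Fin d × Bool}
    (h : y + step p.1 p.2 = y + step q.1 q.2) : p = q := by
  obtain ⟨i, b⟩ := p
  obtain ⟨i', b'⟩ := q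
  have hs : step i b = step i' b' := add_left_cancel h
  have h1 : i = i' := by
    by_contra hne
    have := congrFun hs i
    simp only [step, if_pos rfl, if_neg (Ne.symm hne)] at this
    cases b <;> simp_all
  subst h1
  have := congrFun hs i
  simp only [step, if_pos rfl] at this
  cases b <;> cases b' <;> simp_all

lemma dist1_add_step {d : ℕ} (y : Site d) (i : Fin d) (b : Bool) :
    dist1 (y + step i b) y = 1 := by
  unfold dist1
  rw [Finset.sum_eq_single i]
  · simp [step]; cases b <;> simp
  · intro j _ hj; simp [step, hj]
  · simp

lemma card_nbrs_le {d : ℕ} (hd : 0 < d) {Λ : Finset (Site d)} (y : Site d)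
    (W : Finset {z : Site d // z ∈ Λ}) :
    (W.filter fun z : {z : Site d // z ∈ Λ} => dist1 (z : Site d) y = 1).card ≤ 2 * d := by
  classical
  set pick : {z : Site d // z ∈ Λ} → Fin d × Bool := fun z =>
    if h : ∃ p : Fin d × Bool, (z : Site d) = y + step p.1 p.2 then h.choose
    else (⟨0, hd⟩, true) with hpick
  have key : ∀ z ∈ W.filter fun z : {z : Site d // z ∈ Λ} => dist1 (z : Site d) y = 1,
      (z : Site d) = y + step (pick z).1 (pick z).2 := by
    intro z hz
    rw [Finset.mem_filter] at hz
    have h := exists_step_of_dist1 hz.2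
    rw [hpick]; simp only [dif_pos h]
    exact h.choose_spec
  have inj : Set.InjOn pick (W.filter fun z : {z : Site d // z ∈ Λ} => dist1 (z : Site d) y = 1) := by
    intro a ha b hb hab
    have h1 := key a ha
    have h2 := key b hb
    rw [hab] at h1
    exact Subtype.ext (h1.trans h2.symm)
  calc (W.filter fun z : {z : Site d // z ∈ Λ} => dist1 (z : Site d) y = 1).card
      ≤ (Finset.univ : Finset (Fin d × Bool)).card :=
        Finset.card_le_card_of_injOn pick (fun _ _ => Finset.mem_univ _) inj
    _ = 2 * d := by simp [Finset.card_univ]; ring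

section Dyn
variable (d : ℕ) (γ : ℝ) (Λ : Finset (Site d))

/-- linear flow associated to an integer toppling vector -/
noncomputable def flowI (k : SiteIn d Λ → ℤ) : ConfigIn d Λ :=
  fun y => ∑ z, (k z : ℝ) * toppleMatIn d γ Λ z y

variable {d γ Λ}

lemma flowI_zero : flowI d γ Λ 0 = fun _ => 0 := by
  funext y; simp [flowI]

lemma flowI_add (k k' : SiteIn d Λ → ℤ) :
    flowI d γ Λ (k + k') = fun y => flowI d γ Λ k y + flowI d γ Λ k' y := by
  funext y
  simp [flowI, ← Finset.sum_add_distrib, add_mul]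

lemma flowI_single (x : SiteIn d Λ) (y : SiteIn d Λ) :
    flowI d γ Λ (fun z => if z = x then (-1 : ℤ) else 0) y = - toppleMatIn d γ Λ x y := by
  unfold flowI
  rw [Finset.sum_eq_single x]
  · simp
  · intro b _ hb; simp [hb]
  · simp

lemma applyListIn_eq_flow (l : List (SiteIn d Λ)) (η : ConfigIn d Λ) :
    ∃ c : SiteIn d Λ → ℤ, applyListIn d γ Λ l η = fun y => η y + flowI d γ Λ c y := by
  induction l generalizing η with
  | nil => exact ⟨0, by funext y; simp [applyListIn, flowI_zero]⟩
  | cons x l ih =>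
    obtain ⟨c, hc⟩ := ih (toppleIn d γ Λ x η)
    refine ⟨(fun z => if z = x then (-1 : ℤ) else 0) + c, ?_⟩
    funext y
    show applyListIn d γ Λ l (toppleIn d γ Λ x η) y = _
    rw [hc]
    simp only [toppleIn, flowI_add, flowI_single]
    ring

lemma legal_nonneg {η : ConfigIn d Λ} (hγ : 0 ≤ γ) (hη : ∀ y, 0 ≤ η y)
    {l : List (SiteIn d Λ)} (hl : legalListIn d γ Λ η l) :
    ∀ y, 0 ≤ applyListIn d γ Λ l η y := by
  induction l generalizing η with
  | nil => exact hη
  | cons x l ih =>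
    obtain ⟨hx, hl⟩ := hl
    refine ih (η := toppleIn d γ Λ x η) ?_ hl
    intro y
    unfold toppleIn toppleMatIn
    by_cases hxy : (x : Site d) = (y : Site d)
    · have hxy' : x = y := Subtype.ext hxy
      subst hxy'
      rw [if_pos hxy]
      linarith
    · simp only [if_neg hxy]
      have h0 := hη y
      split <;> linarith

lemma isAllowed_mono {η η' : ConfigIn d Λ} (h : ∀ y, η y ≤ η' y)
    (hη : isAllowed d Λ η) : isAllowed d Λ η' := by
  intro W hW
  obtain ⟨y, hy, hcard⟩ := hη W hW
  exact ⟨y, hy, le_trans hcard (h y)⟩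

lemma isAllowed_topple {η : ConfigIn d Λ} {x : SiteIn d Λ}
    (hη : isAllowed d Λ η) (hx : 2 * d + γ ≤ η x) :
    isAllowed d Λ (toppleIn d γ Λ x η) := by
  intro W hW
  by_cases hxW : x ∈ W
  · by_cases hW' : (W.erase x).Nonempty
    · obtain ⟨y, hy, hcard⟩ := hη (W.erase x) hW'
      have hyx : y ≠ x := (Finset.mem_erase.mp hy).1
      refine ⟨y, Finset.mem_of_mem_erase hy, ?_⟩
      have hsplit : (W.filter fun z : SiteIn d Λ => dist1 (z : Site d) (y : Site d) = 1).card
          = ((W.erase x).filter fun z : SiteIn d Λ => dist1 (z : Site d) (y : Site d) = 1).card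
            + (if dist1 (x : Site d) (y : Site d) = 1 then 1 else 0) := by
        rw [Finset.filter_erase]
        by_cases hd1 : dist1 (x : Site d) (y : Site d) = 1
        · rw [if_pos hd1, Finset.card_erase_of_mem (Finset.mem_filter.mpr ⟨hxW, hd1⟩)]
          have : 0 < (W.filter fun z : SiteIn d Λ => dist1 (z : Site d) (y : Site d) = 1).card :=
            Finset.card_pos.mpr ⟨x, Finset.mem_filter.mpr ⟨hxW, hd1⟩⟩
          omega
        · have hnm : x ∉ W.filter fun z : SiteIn d Λ => dist1 (z : Site d) (y : Site d) = 1 :=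
            fun hmem => hd1 (Finset.mem_filter.mp hmem).2
          rw [if_neg hd1, Finset.erase_eq_of_notMem hnm, add_zero]
      have htop : toppleIn d γ Λ x η y = η y + (if dist1 (x : Site d) (y : Site d) = 1 then 1 else 0) := by
        unfold toppleIn toppleMatIn
        have hne : (x : Site d) ≠ (y : Site d) := fun hc => hyx (Subtype.ext hc.symm)
        rw [if_neg hne]
        split <;> ring
      rw [htop, hsplit]
      push_cast
      gcongr
    · have hWx : W = {x} := by
        rcases Finset.nonempty_iff_ne_empty.mp hW with _
        have := Finset.not_nonempty_iff_eq_empty.mp hW'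
        ext z
        simp only [Finset.mem_singleton]
        constructor
        · intro hz
          by_contra hne
          exact (Finset.notMem_empty z) (this ▸ Finset.mem_erase.mpr ⟨hne, hz⟩)
        · rintro rfl; exact hxW
      subst hWx
      refine ⟨x, Finset.mem_singleton_self x, ?_⟩
      have hflt : ({x} : Finset (SiteIn d Λ)).filter
          (fun z : SiteIn d Λ => dist1 (z : Site d) (x : Site d) = 1) = ∅ := by
        rw [Finset.filter_singleton]
        rw [if_neg]
        simp [dist1]
      rw [hflt]
      have h0 : toppleIn d γ Λ x η x = η x - (2 * d + γ) := by
        unfold toppleIn toppleMatIn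
        rw [if_pos rfl]
      rw [h0]
      simp only [Finset.card_empty, Nat.cast_zero]
      linarith
  · obtain ⟨y, hy, hcard⟩ := hη W hW
    refine ⟨y, hy, le_trans hcard ?_⟩
    unfold toppleIn toppleMatIn
    have hne : (x : Site d) ≠ (y : Site d) := fun hc => hxW (Subtype.ext hc ▸ hy)
    rw [if_neg hne]
    split <;> linarith

/-- The neighbors of `y` inside `Λ`. -/
noncomputable def nbrsIn (y : SiteIn d Λ) : Finset (SiteIn d Λ) :=
  Finset.univ.filter (fun z : SiteIn d Λ => dist1 (z : Site d) (y : Site d) = 1)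

lemma flowI_eq (k : SiteIn d Λ → ℤ) (y : SiteIn d Λ) :
    flowI d γ Λ k y = (k y : ℝ) * (2 * d + γ) - ((∑ z ∈ nbrsIn y, k z : ℤ) : ℝ) := by
  unfold flowI
  rw [← Finset.add_sum_erase _ _ (Finset.mem_univ y)]
  have hyy : toppleMatIn d γ Λ y y = 2 * d + γ := by
    unfold toppleMatIn; rw [if_pos rfl]
  have h1 : ∀ z ∈ Finset.univ.erase y,
      (k z : ℝ) * toppleMatIn d γ Λ z y = if dist1 (z : Site d) (y : Site d) = 1 then -(k z : ℝ) else 0 := by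
    intro z hz
    have hne : (z : Site d) ≠ (y : Site d) :=
      fun hc => (Finset.mem_erase.mp hz).1 (Subtype.ext hc)
    unfold toppleMatIn
    rw [if_neg hne]
    split <;> ring
  rw [Finset.sum_congr rfl h1, ← Finset.sum_filter]
  have hfe : (Finset.univ.erase y).filter (fun z : SiteIn d Λ => dist1 (z : Site d) (y : Site d) = 1)
      = nbrsIn y := by
    ext z
    simp only [nbrsIn, Finset.mem_filter, Finset.mem_erase, Finset.mem_univ, true_and, and_true]
    constructor
    · tauto
    · intro h
      refine ⟨fun hc => ?_, h⟩
      subst hc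
      rw [dist1_self] at h
      omega
  rw [hfe, hyy, Finset.sum_neg_distrib]
  push_cast
  ring

lemma legal_allowed {η : ConfigIn d Λ} (hη : isAllowed d Λ η)
    {l : List (SiteIn d Λ)} (hl : legalListIn d γ Λ η l) :
    isAllowed d Λ (applyListIn d γ Λ l η) := by
  induction l generalizing η with
  | nil => exact hη
  | cons x l ih => exact ih (isAllowed_topple hη hl.1) hl.2

lemma stabilize_mem (hγ : 0 ≤ γ)
    (hex : ∀ ζ : ConfigIn d Λ, ∃ l, stabilizingListIn d γ Λ ζ l)
    {ξ : ConfigIn d Λ} (h0 : ∀ y, 0 ≤ ξ y) (ha : isAllowed d Λ ξ) :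
    stabilizeIn d γ Λ ξ ∈ allowedSet d γ Λ ∧
      ∃ c, ∀ y, stabilizeIn d γ Λ ξ y = ξ y + flowI d γ Λ c y := by
  have h := hex ξ
  have hrw : stabilizeIn d γ Λ ξ = applyListIn d γ Λ h.choose ξ := by
    unfold stabilizeIn
    rw [dif_pos h]
  obtain ⟨hleg, hstab⟩ := h.choose_spec
  constructor
  · rw [hrw]
    exact ⟨fun y => ⟨legal_nonneg hγ h0 hleg y, hstab y⟩, legal_allowed ha hleg⟩
  · obtain ⟨c, hc⟩ := applyListIn_eq_flow h.choose ξ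
    exact ⟨c, fun y => by rw [hrw, hc]⟩

lemma addOp_spec (hγ : 0 ≤ γ)
    (hex : ∀ ζ : ConfigIn d Λ, ∃ l, stabilizingListIn d γ Λ ζ l)
    (x : SiteIn d Λ) {η : ConfigIn d Λ} (hη : η ∈ allowedSet d γ Λ) :
    addOpIn d γ Λ x η ∈ allowedSet d γ Λ ∧
      ∃ c, ∀ y, addOpIn d γ Λ x η y = η y + deltaIn d Λ x y + flowI d γ Λ c y := by
  have hdelta : ∀ y, (0:ℝ) ≤ deltaIn d Λ x y := by
    intro y; unfold deltaIn; split <;> norm_num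
  have h0 : ∀ y, 0 ≤ (η + deltaIn d Λ x) y :=
    fun y => add_nonneg (hη.1 y).1 (hdelta y)
  have ha : isAllowed d Λ (η + deltaIn d Λ x) :=
    isAllowed_mono (fun y => le_add_of_nonneg_right (hdelta y)) hη.2
  obtain ⟨hmem, c, hc⟩ := stabilize_mem hγ hex h0 ha
  exact ⟨hmem, c, fun y => hc y⟩

lemma nbr_sum_le (hd : 0 < d) (y : SiteIn d Λ) (f : Site d → ℤ)
    (hf : ∀ p : Fin d × Bool, 0 ≤ f ((y : Site d) + step p.1 p.2)) :
    ∑ z ∈ nbrsIn y, f (z : Site d) ≤ ∑ p : Fin d × Bool, f ((y : Site d) + step p.1 p.2) := by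
  classical
  set pick : SiteIn d Λ → Fin d × Bool := fun z =>
    if h : ∃ p : Fin d × Bool, (z : Site d) = (y : Site d) + step p.1 p.2 then h.choose
    else (⟨0, hd⟩, true) with hpick
  have key : ∀ z ∈ nbrsIn (Λ := Λ) y, (z : Site d) = (y : Site d) + step (pick z).1 (pick z).2 := by
    intro z hz
    rw [nbrsIn, Finset.mem_filter] at hz
    have h := exists_step_of_dist1 hz.2
    rw [hpick]; simp only [dif_pos h]
    exact h.choose_spec
  calc ∑ z ∈ nbrsIn (Λ := Λ) y, f (z : Site d)
      = ∑ z ∈ nbrsIn (Λ := Λ) y, f ((y : Site d) + step (pick z).1 (pick z).2) :=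
        Finset.sum_congr rfl fun z hz => by rw [← key z hz]
    _ = ∑ p ∈ (nbrsIn (Λ := Λ) y).image pick, f ((y : Site d) + step p.1 p.2) := by
        rw [Finset.sum_image]
        intro a ha b hb hab
        have h1 := key a ha
        rw [hab] at h1
        exact Subtype.ext (h1.trans (key b hb).symm)
    _ ≤ ∑ p : Fin d × Bool, f ((y : Site d) + step p.1 p.2) :=
        Finset.sum_le_sum_of_subset_of_nonneg (Finset.subset_univ _) (fun p _ _ => hf p)

lemma uniq_aux (hd : 0 < d) (hγ : 0 ≤ γ) {η ζ : ConfigIn d Λ}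
    (hη : η ∈ allowedSet d γ Λ) (hζ : ζ ∈ allowedSet d γ Λ)
    {k : SiteIn d Λ → ℤ} (hk : ∀ y, η y = ζ y + flowI d γ Λ k y)
    (hpos : ∃ z, 1 ≤ k z) : False := by
  classical
  obtain ⟨z0, hz0⟩ := hpos
  have hne : (Finset.univ : Finset (SiteIn d Λ)).Nonempty := ⟨z0, Finset.mem_univ z0⟩
  set M := Finset.univ.sup' hne k with hM
  have hM1 : 1 ≤ M := le_trans hz0 (Finset.le_sup' k (Finset.mem_univ z0))
  set W := Finset.univ.filter (fun z : SiteIn d Λ => k z = M) with hW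
  have hWne : W.Nonempty := by
    obtain ⟨z, _, hz⟩ := Finset.exists_mem_eq_sup' hne k
    exact ⟨z, Finset.mem_filter.mpr ⟨Finset.mem_univ z, hz.symm⟩⟩
  obtain ⟨y, hyW, hcard⟩ := hζ.2 W hWne
  set D := (W.filter fun z : SiteIn d Λ => dist1 (z : Site d) (y : Site d) = 1).card with hD
  -- neighbor sum bound in ℤ
  have hNsum : ∑ z ∈ nbrsIn y, k z ≤ (M - 1) * (nbrsIn (Λ := Λ) y).card + D := by
    have hbd : ∀ z ∈ nbrsIn (Λ := Λ) y, k z ≤ (M - 1) + (if z ∈ W then 1 else 0) := by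
      intro z _
      by_cases hzW : z ∈ W
      · rw [if_pos hzW]
        have : k z = M := (Finset.mem_filter.mp hzW).2
        omega
      · rw [if_neg hzW]
        have h1 : k z ≤ M := Finset.le_sup' k (Finset.mem_univ z)
        have h2 : k z ≠ M := fun hc => hzW (Finset.mem_filter.mpr ⟨Finset.mem_univ z, hc⟩)
        omega
    calc ∑ z ∈ nbrsIn (Λ := Λ) y, k z
        ≤ ∑ z ∈ nbrsIn (Λ := Λ) y, ((M - 1) + (if z ∈ W then 1 else 0)) :=
          Finset.sum_le_sum hbd
      _ = (M - 1) * (nbrsIn (Λ := Λ) y).card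
            + ((nbrsIn (Λ := Λ) y).filter (fun z => z ∈ W)).card := by
          rw [Finset.sum_add_distrib, Finset.sum_const, Finset.sum_ite_mem]
          simp [mul_comm, Finset.filter_mem_eq_inter, Finset.inter_comm]
      _ = (M - 1) * (nbrsIn (Λ := Λ) y).card + D := by
          congr 2
          apply Finset.card_nbij' id id <;> intro a ha <;>
            simp only [nbrsIn, hW, Finset.mem_coe, Finset.mem_filter, Finset.mem_univ, true_and, id] at * <;> tauto
  have hNcard : (nbrsIn (Λ := Λ) y).card ≤ 2 * d := card_nbrs_le hd (y : Site d) Finset.univ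
  have hsum_le : (∑ z ∈ nbrsIn (Λ := Λ) y, k z) ≤ (M - 1) * (2 * d) + D := by
    have h1 : (M - 1) * ((nbrsIn (Λ := Λ) y).card : ℤ) ≤ (M - 1) * (2 * d : ℤ) := by
      apply mul_le_mul_of_nonneg_left (by exact_mod_cast hNcard) (by omega)
    omega
  -- real arithmetic
  have hflow := flowI_eq (γ := γ) k y
  have hky : k y = M := (Finset.mem_filter.mp hyW).2
  have hup : η y < 2 * d + γ := (hη.1 y).2
  have hcast : ((∑ z ∈ nbrsIn (Λ := Λ) y, k z : ℤ) : ℝ) ≤ ((M : ℝ) - 1) * (2 * d) + D := by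
    exact_mod_cast hsum_le
  have hMR : (1:ℝ) ≤ (M : ℝ) := by exact_mod_cast hM1
  have hprod : 0 ≤ γ * ((M:ℝ) - 1) := mul_nonneg hγ (by linarith)
  have hkeq := hk y
  rw [hflow, hky] at hkeq
  -- ζ y < D contradicts hcard
  have : ζ y < D := by nlinarith [hcard, hup]
  linarith [hcard]

lemma flowI_neg (k : SiteIn d Λ → ℤ) :
    flowI d γ Λ (-k) = fun y => - flowI d γ Λ k y := by
  funext y
  simp [flowI, Finset.sum_neg_distrib]

lemma uniq0 (hd : 0 < d) (hγ : 0 ≤ γ) {η ζ : ConfigIn d Λ}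
    (hη : η ∈ allowedSet d γ Λ) (hζ : ζ ∈ allowedSet d γ Λ)
    {k : SiteIn d Λ → ℤ} (hk : ∀ y, η y = ζ y + flowI d γ Λ k y) :
    k = 0 := by
  by_cases hk0 : ∀ z, k z = 0
  · exact funext hk0
  · push_neg at hk0
    obtain ⟨z, hz⟩ := hk0
    rcases lt_or_gt_of_ne hz with hlt | hgt
    · exact absurd (uniq_aux hd hγ hζ hη (k := -k)
        (fun y => by rw [flowI_neg]; have := hk y; simp; linarith [hk y])
        ⟨z, by simp; omega⟩) not_false
    · exact absurd (uniq_aux hd hγ hη hζ hk ⟨z, by omega⟩) not_false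

lemma uniq (hd : 0 < d) (hγ : 0 ≤ γ) {η ζ : ConfigIn d Λ}
    (hη : η ∈ allowedSet d γ Λ) (hζ : ζ ∈ allowedSet d γ Λ)
    {k : SiteIn d Λ → ℤ} (hk : ∀ y, η y = ζ y + flowI d γ Λ k y) :
    η = ζ := by
  have h0 := uniq0 hd hγ hη hζ hk
  funext y
  rw [hk y, h0, flowI_zero, add_zero]

lemma flowI_sub (k k' : SiteIn d Λ → ℤ) (y : SiteIn d Λ) :
    flowI d γ Λ (k - k') y = flowI d γ Λ k y - flowI d γ Λ k' y := by
  have h : k - k' = k + -k' := by funext z; simp; ring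
  rw [h, flowI_add, flowI_neg]
  ring

lemma measurableSet_allowedSet : MeasurableSet (allowedSet d γ Λ) := by
  have hrw : allowedSet d γ Λ =
      (⋂ y : SiteIn d Λ, {η : ConfigIn d Λ | 0 ≤ η y ∧ η y < 2 * d + γ}) ∩
      (⋂ W : Finset (SiteIn d Λ), ⋂ _ : W.Nonempty, ⋃ y : SiteIn d Λ, ⋃ _ : y ∈ W,
        {η : ConfigIn d Λ |
          ((W.filter fun z : SiteIn d Λ => dist1 (z : Site d) (y : Site d) = 1).card : ℝ) ≤ η y}) := by
    ext η
    simp only [allowedSet, isAllowed, Set.mem_inter_iff, Set.mem_iInter, Set.mem_iUnion,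
      Set.mem_setOf_eq, exists_prop]
  rw [hrw]
  refine MeasurableSet.inter (MeasurableSet.iInter fun y => ?_)
    (MeasurableSet.iInter fun W => MeasurableSet.iInter fun _ =>
      MeasurableSet.iUnion fun y => MeasurableSet.iUnion fun _ => ?_)
  · have h2 : {η : ConfigIn d Λ | 0 ≤ η y ∧ η y < 2 * d + γ}
        = (fun η : ConfigIn d Λ => η y) ⁻¹' (Set.Ico 0 (2 * d + γ)) := by
      ext η; simp [Set.mem_Ico]
    rw [h2]
    exact (measurable_pi_apply y) measurableSet_Ico
  · exact measurableSet_le measurable_const (measurable_pi_apply y)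

lemma highly_allowed (hd : 0 < d) {η : ConfigIn d Λ}
    (hhi : ∀ y, (2 * d : ℝ) ≤ η y) : isAllowed d Λ η := by
  intro W hW
  obtain ⟨y, hy⟩ := hW
  refine ⟨y, hy, le_trans ?_ (hhi y)⟩
  have := card_nbrs_le hd (y : Site d) W
  calc ((W.filter fun z : SiteIn d Λ => dist1 (z : Site d) (y : Site d) = 1).card : ℝ)
      ≤ ((2 * d : ℕ) : ℝ) := by exact_mod_cast this
    _ = (2 * d : ℝ) := by push_cast; ring

lemma step_apply_self {d : ℕ} (i : Fin d) (b : Bool) : step i b i = if b then 1 else -1 := by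
  simp [step]

lemma qstep {d : ℕ} (y : Site d) (i : Fin d) (b : Bool) :
    ∑ j, (y + step i b) j ^ 2 = (∑ j, y j ^ 2) + (if b then 2 * y i else -2 * y i) + 1 := by
  have h1 : ∀ j ∈ Finset.univ.erase i, (y + step i b) j ^ 2 = y j ^ 2 := by
    intro j hj
    have : j ≠ i := (Finset.mem_erase.mp hj).1
    simp [step, this]
  rw [← Finset.add_sum_erase _ (fun j => (y + step i b) j ^ 2) (Finset.mem_univ i),
    Finset.sum_congr rfl h1,
    ← Finset.add_sum_erase _ (fun j => y j ^ 2) (Finset.mem_univ i)]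
  simp only [Pi.add_apply]
  cases b <;> simp [step_apply_self] <;> ring

lemma reach (hd : 0 < d) (hγ : 0 ≤ γ)
    (hex : ∀ ζ : ConfigIn d Λ, ∃ l, stabilizingListIn d γ Λ ζ l)
    (ξ : ConfigIn d Λ) :
    ∃ η ∈ allowedSet d γ Λ, ∃ k, ∀ y, η y = ξ y + flowI d γ Λ k y := by
  classical
  rcases isEmpty_or_nonempty (SiteIn d Λ) with hemp | hne
  · refine ⟨ξ, ⟨fun y => isEmptyElim y, fun W hW => ?_⟩, 0, fun y => isEmptyElim y⟩
    obtain ⟨y, _⟩ := hW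
    exact isEmptyElim y
  · set qb : Site d → ℤ := fun s => ∑ i, s i ^ 2 with hqb
    set A : ℤ := 1 + Finset.univ.sup' Finset.univ_nonempty
      (fun z : SiteIn d Λ => qb (z : Site d) + 2 * (∑ i, |(z : Site d) i|) + 1) with hA
    set mb : Site d → ℤ := fun s => A - qb s with hmb
    set m : SiteIn d Λ → ℤ := fun z => mb (z : Site d) with hm
    have hAz : ∀ z : SiteIn d Λ, qb (z : Site d) + 2 * (∑ i, |(z : Site d) i|) + 1 ≤ A - 1 := by
      intro z
      have := Finset.le_sup' (f := fun z : SiteIn d Λ => qb (z : Site d) + 2 * (∑ i, |(z : Site d) i|) + 1)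
        (Finset.mem_univ z)
      omega
    have habs : ∀ (z : SiteIn d Λ) (i : Fin d), |(z : Site d) i| ≤ ∑ j, |(z : Site d) j| :=
      fun z i => Finset.single_le_sum (f := fun j => |(z : Site d) j|)
        (fun j _ => abs_nonneg _) (Finset.mem_univ i)
    have hrpos : ∀ z : SiteIn d Λ, 0 ≤ ∑ j, |(z : Site d) j| :=
      fun z => Finset.sum_nonneg fun j _ => abs_nonneg _
    have hmbstep : ∀ (z : SiteIn d Λ) (p : Fin d × Bool), 0 ≤ mb ((z : Site d) + step p.1 p.2) := by
      intro z p
      have hq := qstep (z : Site d) p.1 p.2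
      have h1 : (if p.2 then 2 * (z : Site d) p.1 else -2 * (z : Site d) p.1) ≤ 2 * |(z : Site d) p.1| := by
        cases p.2 <;> simp <;> [skip; skip] <;> first
          | linarith [neg_le_abs ((z : Site d) p.1)]
          | linarith [le_abs_self ((z : Site d) p.1)]
      have h2 := habs z p.1
      have h3 := hAz z
      simp only [hmb]
      rw [show qb ((z : Site d) + step p.1 p.2) = ∑ j, ((z : Site d) + step p.1 p.2) j ^ 2 from rfl, hq]
      have : qb (z : Site d) = ∑ j, (z : Site d) j ^ 2 := rfl
      omega
    have hm1 : ∀ z : SiteIn d Λ, 1 ≤ m z := by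
      intro z
      have h3 := hAz z
      have := hrpos z
      simp only [hm, hmb]
      omega
    have hstepsum : ∀ z : SiteIn d Λ,
        ∑ p : Fin d × Bool, mb ((z : Site d) + step p.1 p.2) = 2 * d * m z - 2 * d := by
      intro z
      rw [Fintype.sum_prod_type]
      have hin : ∀ i : Fin d,
          ∑ b : Bool, mb ((z : Site d) + step i b) = 2 * m z - 2 := by
        intro i
        rw [Fintype.sum_bool]
        simp only [hmb, hm]
        rw [show qb ((z : Site d) + step i true) = ∑ j, ((z : Site d) + step i true) j ^ 2 from rfl,
          qstep, show qb ((z : Site d) + step i false) = ∑ j, ((z : Site d) + step i false) j ^ 2 from rfl,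
          qstep]
        have : qb (z : Site d) = ∑ j, (z : Site d) j ^ 2 := rfl
        simp only [Bool.false_eq_true, if_true, if_false]
        omega
      rw [Finset.sum_congr rfl (fun i _ => hin i), Finset.sum_const]
      simp [Finset.card_univ]
      ring
    have hNsum : ∀ y : SiteIn d Λ, ∑ z ∈ nbrsIn y, m z ≤ 2 * d * m y - 2 * d := by
      intro y
      have := nbr_sum_le hd y mb (hmbstep y)
      rw [hstepsum y] at this
      exact this
    have hflowm : ∀ y : SiteIn d Λ, (2 * d : ℝ) ≤ flowI d γ Λ m y := by
      intro y
      rw [flowI_eq]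
      have h1 : ((∑ z ∈ nbrsIn (Λ := Λ) y, m z : ℤ) : ℝ) ≤ 2 * d * (m y : ℝ) - 2 * d := by
        exact_mod_cast hNsum y
      have h2 : (1 : ℝ) ≤ (m y : ℝ) := by exact_mod_cast hm1 y
      nlinarith [mul_nonneg hγ (le_trans zero_le_one h2)]
    have hd2 : (0 : ℝ) < 2 * d := by
      have : (0:ℝ) < (d:ℝ) := by exact_mod_cast hd
      linarith
    obtain ⟨n, hn⟩ := exists_nat_ge (Finset.univ.sup' Finset.univ_nonempty
      (fun y : SiteIn d Λ => (2 * d - ξ y) / (2 * d)))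
    have hlow : ∀ y : SiteIn d Λ, 2 * d - ξ y ≤ n * (2 * d) := by
      intro y
      have h1 : (2 * d - ξ y) / (2 * d) ≤ (n : ℝ) :=
        le_trans (Finset.le_sup' (f := fun y : SiteIn d Λ => (2 * d - ξ y) / (2 * d)) (Finset.mem_univ y)) hn
      rw [div_le_iff₀ hd2] at h1
      linarith
    set k₁ : SiteIn d Λ → ℤ := fun z => n * m z with hk₁
    have hflowk1 : ∀ y, flowI d γ Λ k₁ y = n * flowI d γ Λ m y := by
      intro y
      simp only [flowI, hk₁, Finset.mul_sum]
      apply Finset.sum_congr rfl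
      intro z _
      push_cast
      ring
    set ξ' : ConfigIn d Λ := fun y => ξ y + flowI d γ Λ k₁ y with hξ'
    have hhi : ∀ y, (2 * d : ℝ) ≤ ξ' y := by
      intro y
      have h1 : (n : ℝ) * (2 * d) ≤ (n : ℝ) * flowI d γ Λ m y :=
        mul_le_mul_of_nonneg_left (hflowm y) (Nat.cast_nonneg n)
      have h2 := hlow y
      simp only [hξ', hflowk1 y]
      linarith
    have h0 : ∀ y, 0 ≤ ξ' y := fun y => le_trans (le_of_lt hd2) (hhi y)
    have ha : isAllowed d Λ ξ' := highly_allowed hd hhi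
    obtain ⟨hmem, c, hc⟩ := stabilize_mem hγ hex h0 ha
    refine ⟨stabilizeIn d γ Λ ξ', hmem, k₁ + c, fun y => ?_⟩
    rw [hc y, flowI_add]
    simp only [hξ']
    ring

end Dyn

open MeasureTheory

/-- The addition operator `a^{(γ)}_{Λ,x}` maps `R^{(γ)}_Λ` bijectively onto
itself, preserves Lebesgue measure on `R^{(γ)}_Λ`, and leaves the normalized
uniform measure `m^{(γ)}_Λ` on `R^{(γ)}_Λ` invariant. -/
theorem addOp_bijOn_measurePreserving (d : ℕ) (hd : 0 < d) (γ : ℝ) (hγ : 0 ≤ γ)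
    (Λ : Finset (Site d)) (x : SiteIn d Λ)
    (hex : ∀ ζ : ConfigIn d Λ, ∃ l, stabilizingListIn d γ Λ ζ l) :
    Set.BijOn (addOpIn d γ Λ x) (allowedSet d γ Λ) (allowedSet d γ Λ) ∧
    (∀ A : Set (ConfigIn d Λ), MeasurableSet A → A ⊆ allowedSet d γ Λ →
      volume (addOpIn d γ Λ x '' A) = volume A) ∧
    Measure.map (addOpIn d γ Λ x)
        ((volume (allowedSet d γ Λ))⁻¹ • volume.restrict (allowedSet d γ Λ)) =
      (volume (allowedSet d γ Λ))⁻¹ • volume.restrict (allowedSet d γ Λ) := by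
  classical
  have hRmeas : MeasurableSet (allowedSet d γ Λ) := measurableSet_allowedSet
  set R := allowedSet d γ Λ with hRdef
  set a : ConfigIn d Λ → ConfigIn d Λ := addOpIn d γ Λ x with hadef
  set v : (SiteIn d Λ → ℤ) → ConfigIn d Λ := fun k y => deltaIn d Λ x y + flowI d γ Λ k y
    with hvdef
  have hspec : ∀ η ∈ R, ∃ c, a η = η + v c := by
    intro η hη
    obtain ⟨_, c, hc⟩ := addOp_spec hγ hex x hη
    refine ⟨c, funext fun y => ?_⟩
    show a η y = η y + v c y
    simp only [hadef, hvdef]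
    rw [hc y]
    ring
  have hmemR : ∀ η ∈ R, a η ∈ R := fun η hη => (addOp_spec hγ hex x hη).1
  have huniqv : ∀ (η : ConfigIn d Λ) k k', η + v k ∈ R → η + v k' ∈ R → k = k' := by
    intro η k k' h1 h2
    have h0 : k - k' = 0 := uniq0 hd hγ h1 h2 (k := k - k') (fun y => by
      simp only [hvdef, Pi.add_apply, flowI_sub]; ring)
    exact sub_eq_zero.mp h0
  have key1 : ∀ η ∈ R, ∀ k, η + v k ∈ R → a η = η + v k := by
    intro η hη k hk
    obtain ⟨c, hc⟩ := hspec η hη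
    have hcR : η + v c ∈ R := hc ▸ hmemR η hη
    rw [hc, huniqv η c k hcR hk]
  have hInj : Set.InjOn a R := by
    intro η hη ζ hζ hEq
    obtain ⟨c, hc⟩ := hspec η hη
    obtain ⟨c', hc'⟩ := hspec ζ hζ
    refine uniq hd hγ hη hζ (k := c' - c) (fun y => ?_)
    have h1 : (η + v c) y = (ζ + v c') y := by rw [← hc, ← hc', hEq]
    simp only [hvdef, Pi.add_apply] at h1
    rw [flowI_sub]
    linarith
  have hSurj : Set.SurjOn a R R := by
    intro ζ hζ
    obtain ⟨η, hη, k, hk⟩ := reach hd hγ hex (fun y => ζ y - deltaIn d Λ x y)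
    refine ⟨η, hη, ?_⟩
    obtain ⟨c, hc⟩ := hspec η hη
    have hcR : a η ∈ R := hmemR η hη
    refine (uniq hd hγ hcR hζ (k := k + c) (fun y => ?_))
    rw [hc]
    simp only [hvdef, Pi.add_apply, flowI_add]
    linarith [hk y]
  have hBij : Set.BijOn a R R := ⟨fun η hη => hmemR η hη, hInj, hSurj⟩
  set P : (SiteIn d Λ → ℤ) → Set (ConfigIn d Λ) :=
    fun k => R ∩ (fun η => η + v k) ⁻¹' R with hPdef
  have hmeasAdd : ∀ w : ConfigIn d Λ, Measurable (fun η : ConfigIn d Λ => η + w) :=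
    fun w => measurable_pi_lambda _ fun y => by simpa only [Pi.add_apply] using (measurable_pi_apply y : Measurable fun c : ConfigIn d Λ => c y).add_const (w y)
  have hPmeas : ∀ k, MeasurableSet (P k) := fun k => hRmeas.inter (hmeasAdd (v k) hRmeas)
  have hPsub : ∀ k, P k ⊆ R := fun k => Set.inter_subset_left
  have htr : ∀ k, ∀ η ∈ P k, a η = η + v k := fun k η hη => key1 η hη.1 k hη.2
  have hPdisj : Pairwise (Function.onFun Disjoint P) := by
    intro k k' hkk'
    rw [Function.onFun, Set.disjoint_left]
    intro η h1 h2
    exact hkk' (huniqv η k k' h1.2 h2.2)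
  have hPunion : ⋃ k, P k = R := by
    apply Set.Subset.antisymm (Set.iUnion_subset hPsub)
    intro η hη
    obtain ⟨c, hc⟩ := hspec η hη
    exact Set.mem_iUnion.mpr ⟨c, hη, show η + v c ∈ R from hc ▸ hmemR η hη⟩
  have himgeq : ∀ (w : ConfigIn d Λ) (S : Set (ConfigIn d Λ)),
      (fun η : ConfigIn d Λ => η + w) '' S = (fun η : ConfigIn d Λ => η + (-w)) ⁻¹' S := by
    intro w S
    ext ζ
    simp only [Set.mem_image, Set.mem_preimage]
    constructor
    · rintro ⟨η, hη, rfl⟩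
      simpa using hη
    · intro h
      exact ⟨ζ + (-w), h, by abel⟩
  have hImeas : ∀ k (S : Set (ConfigIn d Λ)), MeasurableSet S →
      MeasurableSet ((fun η => η + v k) '' S) := by
    intro k S hS
    rw [himgeq]
    exact hmeasAdd _ hS
  have hIdisj : Pairwise (Function.onFun Disjoint fun k => (fun η => η + v k) '' (P k)) := by
    intro k k' hkk'
    rw [Function.onFun, Set.disjoint_left]
    rintro ζ ⟨η, hη, rfl⟩ ⟨η', hη', hEq⟩
    have h1 : a η = η + v k := htr k η hη
    have h2 : a η' = η' + v k' := htr k' η' hη'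
    have hEq' : η' + v k' = η + v k := hEq
    have hee : η' = η := hInj (hPsub _ hη') (hPsub _ hη) (by rw [h1, h2]; exact hEq')
    subst hee
    exact hkk' (huniqv η' k k' hη.2 hη'.2)
  have hIunion : ⋃ k, (fun η => η + v k) '' (P k) = R := by
    have h1 : ⋃ k, (fun η => η + v k) '' (P k) = a '' R := by
      rw [← hPunion, Set.image_iUnion]
      exact Set.iUnion_congr fun k =>
        Set.image_congr (fun η hη => (htr k η hη).symm)
    rw [h1, ← hPunion]
    rw [hPunion, hBij.image_eq]
  have mp : ∀ w : ConfigIn d Λ, MeasurePreserving (fun η : ConfigIn d Λ => η + w) volume volume :=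
    fun w => measurePreserving_add_right volume w
  have part2 : ∀ A : Set (ConfigIn d Λ), MeasurableSet A → A ⊆ R → volume (a '' A) = volume A := by
    intro A hA hAR
    have hA' : A = ⋃ k, (A ∩ P k) := by
      rw [← Set.inter_iUnion, hPunion, Set.inter_eq_left.mpr hAR]
    have himg : a '' A = ⋃ k, (fun η => η + v k) '' (A ∩ P k) := by
      conv_lhs => rw [hA']
      rw [Set.image_iUnion]
      exact Set.iUnion_congr fun k => Set.image_congr (fun η hη => htr k η hη.2)
    have hdisj2 : Pairwise (Function.onFun Disjoint fun k => (fun η => η + v k) '' (A ∩ P k)) :=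
      fun k k' h => (hIdisj h).mono (Set.image_mono Set.inter_subset_right)
        (Set.image_mono Set.inter_subset_right)
    have hmeas2 : ∀ k, MeasurableSet ((fun η => η + v k) '' (A ∩ P k)) :=
      fun k => hImeas k _ (hA.inter (hPmeas k))
    have hdisj3 : Pairwise (Function.onFun Disjoint fun k => A ∩ P k) :=
      fun k k' h => (hPdisj h).mono Set.inter_subset_right Set.inter_subset_right
    have hmeas3 : ∀ k, MeasurableSet (A ∩ P k) := fun k => hA.inter (hPmeas k)
    rw [himg, measure_iUnion hdisj2 hmeas2]
    have hterm : ∀ k, volume ((fun η => η + v k) '' (A ∩ P k)) = volume (A ∩ P k) := by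
      intro k
      rw [himgeq]
      exact (mp (-(v k))).measure_preimage (hmeas3 k).nullMeasurableSet
    rw [tsum_congr hterm, ← measure_iUnion hdisj3 hmeas3, ← hA']
  have hsum : volume.restrict R = Measure.sum (fun k => volume.restrict (P k)) := by
    rw [← hPunion]
    exact Measure.restrict_iUnion hPdisj hPmeas
  have hae : AEMeasurable a (volume.restrict R) := by
    rw [hsum]
    rw [aemeasurable_sum_measure_iff]
    intro k
    exact ((hmeasAdd (v k)).aemeasurable).congr
      (((ae_restrict_mem (hPmeas k)).mono fun η hη => (htr k η hη).symm))
  have hmap : Measure.map a (volume.restrict R) = volume.restrict R := by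
    ext s hs
    rw [Measure.map_apply_of_aemeasurable hae hs, Measure.restrict_apply' hRmeas,
      Measure.restrict_apply' hRmeas]
    have hsplit : a ⁻¹' s ∩ R = ⋃ k, (P k ∩ (fun η => η + v k) ⁻¹' s) := by
      ext η
      simp only [Set.mem_inter_iff, Set.mem_preimage, Set.mem_iUnion]
      constructor
      · rintro ⟨hs', hR'⟩
        have : η ∈ ⋃ k, P k := hPunion ▸ hR'
        obtain ⟨k, hk⟩ := Set.mem_iUnion.mp this
        exact ⟨k, hk, by rw [← htr k η hk]; exact hs'⟩
      · rintro ⟨k, hk, hks⟩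
        exact ⟨by rw [htr k η hk]; exact hks, hPsub k hk⟩
    have hdisj4 : Pairwise (Function.onFun Disjoint fun k => P k ∩ (fun η => η + v k) ⁻¹' s) :=
      fun k k' h => (hPdisj h).mono Set.inter_subset_left Set.inter_subset_left
    have hmeas4 : ∀ k, MeasurableSet (P k ∩ (fun η => η + v k) ⁻¹' s) :=
      fun k => (hPmeas k).inter (hmeasAdd (v k) hs)
    rw [hsplit, measure_iUnion hdisj4 hmeas4]
    have hterm : ∀ k, volume (P k ∩ (fun η => η + v k) ⁻¹' s)
        = volume ((fun η => η + v k) '' (P k) ∩ s) := by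
      intro k
      have hset : P k ∩ (fun η => η + v k) ⁻¹' s
          = (fun η => η + v k) ⁻¹' ((fun η => η + v k) '' (P k) ∩ s) := by
        ext η
        simp only [Set.mem_inter_iff, Set.mem_preimage, Set.mem_image]
        constructor
        · rintro ⟨h1, h2⟩
          exact ⟨⟨η, h1, rfl⟩, h2⟩
        · rintro ⟨⟨η', h1, hEq⟩, h2⟩
          have hEq' : η' + v k = η + v k := hEq
          have hee : η' = η := add_right_cancel hEq'
          subst hee
          exact ⟨h1, h2⟩
      rw [hset]
      exact (mp (v k)).measure_preimage
        ((hImeas k _ (hPmeas k)).inter hs).nullMeasurableSet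
    have hdisj5 : Pairwise (Function.onFun Disjoint fun k => (fun η => η + v k) '' (P k) ∩ s) :=
      fun k k' h => (hIdisj h).mono Set.inter_subset_left Set.inter_subset_left
    have hmeas5 : ∀ k, MeasurableSet ((fun η => η + v k) '' (P k) ∩ s) :=
      fun k => (hImeas k _ (hPmeas k)).inter hs
    rw [tsum_congr hterm, ← measure_iUnion hdisj5 hmeas5, ← Set.iUnion_inter, hIunion,
      Set.inter_comm]
  refine ⟨hBij, part2, ?_⟩
  rw [Measure.map_smul, hmap]
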